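/- arXiv:1704.05875 — 2 statements merged into one kernel-verified Lean document; each statement's English description precedes it below -/
import Mathlib

section
/- If h and φ together with a real one-form a = a_w dw + a_{w̄} dw̄ satisfy |φ|^2 = e^h, the holomorphicity condition ∂_{w̄}φ - i a_{w̄} φ = 0 with φ nonvanishing, and the magnetic equation (i/2) f_{w w̄} + (Ω/4)(-C_0 + C|φ|^2) = 0 where f_{w w̄} = ∂_w a_{w̄} - ∂_{w̄} a_w, then h satisfies 4 ∂_w ∂_{w̄} h - 2Ω(C_0 - C e^h) = 0. -/
open Complex

/-- Wirtinger derivative ∂/∂w of a function ℂ → ℂ, viewed as a real-differentiable map. -/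
noncomputable def dw (f : ℂ → ℂ) (z : ℂ) : ℂ :=
  (1/2 : ℂ) * (fderiv ℝ f z 1 - Complex.I * fderiv ℝ f z Complex.I)

/-- Wirtinger derivative ∂/∂w̄. -/
noncomputable def dwbar (f : ℂ → ℂ) (z : ℂ) : ℂ :=
  (1/2 : ℂ) * (fderiv ℝ f z 1 + Complex.I * fderiv ℝ f z Complex.I)

section helpers
variable {f g : ℂ → ℂ} {z : ℂ} {U : Set ℂ}

lemma dw_congr (h : f =ᶠ[nhds z] g) : dw f z = dw g z := by
  unfold dw; rw [h.fderiv_eq]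

lemma dwbar_congr (h : f =ᶠ[nhds z] g) : dwbar f z = dwbar g z := by
  unfold dwbar; rw [h.fderiv_eq]

lemma dw_mul (hf : DifferentiableAt ℝ f z) (hg : DifferentiableAt ℝ g z) :
    dw (fun x => f x * g x) z = dw f z * g z + f z * dw g z := by
  unfold dw
  rw [fderiv_fun_mul hf hg]
  simp only [ContinuousLinearMap.add_apply, ContinuousLinearMap.smul_apply, smul_eq_mul]
  ring

lemma dwbar_mul (hf : DifferentiableAt ℝ f z) (hg : DifferentiableAt ℝ g z) :
    dwbar (fun x => f x * g x) z = dwbar f z * g z + f z * dwbar g z := by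
  unfold dwbar
  rw [fderiv_fun_mul hf hg]
  simp only [ContinuousLinearMap.add_apply, ContinuousLinearMap.smul_apply, smul_eq_mul]
  ring

lemma dw_add (hf : DifferentiableAt ℝ f z) (hg : DifferentiableAt ℝ g z) :
    dw (fun x => f x + g x) z = dw f z + dw g z := by
  unfold dw
  rw [fderiv_fun_add hf hg]
  simp only [ContinuousLinearMap.add_apply]
  ring

lemma dwbar_add (hf : DifferentiableAt ℝ f z) (hg : DifferentiableAt ℝ g z) :
    dwbar (fun x => f x + g x) z = dwbar f z + dwbar g z := by
  unfold dwbar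
  rw [fderiv_fun_add hf hg]
  simp only [ContinuousLinearMap.add_apply]
  ring

lemma dw_const_mul (hf : DifferentiableAt ℝ f z) (c : ℂ) :
    dw (fun x => c * f x) z = c * dw f z := by
  unfold dw
  rw [fderiv_const_mul hf c]
  simp only [ContinuousLinearMap.smul_apply, smul_eq_mul]
  ring

lemma dwbar_const_mul (hf : DifferentiableAt ℝ f z) (c : ℂ) :
    dwbar (fun x => c * f x) z = c * dwbar f z := by
  unfold dwbar
  rw [fderiv_const_mul hf c]
  simp only [ContinuousLinearMap.smul_apply, smul_eq_mul]
  ring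

lemma fderiv_conj_apply (hf : DifferentiableAt ℝ f z) (v : ℂ) :
    fderiv ℝ (fun x => (starRingEnd ℂ) (f x)) z v = (starRingEnd ℂ) (fderiv ℝ f z v) := by
  have h1 : fderiv ℝ (⇑Complex.conjCLE ∘ f) z =
      (Complex.conjCLE : ℂ ≃L[ℝ] ℂ).toContinuousLinearMap.comp (fderiv ℝ f z) :=
    ContinuousLinearEquiv.comp_fderiv _
  have h2 : fderiv ℝ (⇑Complex.conjCLE ∘ f) z v =
      ((Complex.conjCLE : ℂ ≃L[ℝ] ℂ).toContinuousLinearMap.comp (fderiv ℝ f z)) v := by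
    rw [h1]
  simpa [Function.comp_def] using h2

lemma dw_conj (hf : DifferentiableAt ℝ f z) :
    dw (fun x => (starRingEnd ℂ) (f x)) z = (starRingEnd ℂ) (dwbar f z) := by
  unfold dw dwbar
  rw [fderiv_conj_apply hf, fderiv_conj_apply hf, map_mul]
  simp only [map_add, map_mul, map_sub, Complex.conj_I, map_div₀, map_one, map_ofNat]
  ring

lemma dwbar_conj (hf : DifferentiableAt ℝ f z) :
    dwbar (fun x => (starRingEnd ℂ) (f x)) z = (starRingEnd ℂ) (dw f z) := by
  unfold dw dwbar
  rw [fderiv_conj_apply hf, fderiv_conj_apply hf, map_mul]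
  simp only [map_add, map_mul, map_sub, Complex.conj_I, map_div₀, map_one, map_ofNat]
  ring

lemma dwbar_cexp (hf : DifferentiableAt ℝ f z) :
    dwbar (fun x => Complex.exp (f x)) z = Complex.exp (f z) * dwbar f z := by
  unfold dwbar
  rw [(hf.hasFDerivAt.cexp).fderiv]
  simp only [ContinuousLinearMap.smul_apply, smul_eq_mul]
  ring

lemma diffAt_of_contDiffOn {F : Type*} [NormedAddCommGroup F] [NormedSpace ℝ F]
    {f : ℂ → F} (hf : ContDiffOn ℝ (⊤ : ℕ∞) f U) (hU : IsOpen U) (hz : z ∈ U) :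
    DifferentiableAt ℝ f z :=
  ((hf.differentiableOn (by simp)).differentiableAt (hU.mem_nhds hz))

lemma contDiffOn_fderiv_apply (hf : ContDiffOn ℝ (⊤ : ℕ∞) f U) (hU : IsOpen U) (v : ℂ) :
    ContDiffOn ℝ (⊤ : ℕ∞) (fun x => fderiv ℝ f x v) U :=
  (hf.fderiv_of_isOpen hU (by simp)).clm_apply contDiffOn_const

lemma contDiffOn_dwbar (hf : ContDiffOn ℝ (⊤ : ℕ∞) f U) (hU : IsOpen U) :
    ContDiffOn ℝ (⊤ : ℕ∞) (fun x => dwbar f x) U := by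
  unfold dwbar
  exact contDiffOn_const.mul ((contDiffOn_fderiv_apply hf hU 1).add
    (contDiffOn_const.mul (contDiffOn_fderiv_apply hf hU Complex.I)))

lemma contDiffOn_dw (hf : ContDiffOn ℝ (⊤ : ℕ∞) f U) (hU : IsOpen U) :
    ContDiffOn ℝ (⊤ : ℕ∞) (fun x => dw f x) U := by
  unfold dw
  exact contDiffOn_const.mul ((contDiffOn_fderiv_apply hf hU 1).sub
    (contDiffOn_const.mul (contDiffOn_fderiv_apply hf hU Complex.I)))

lemma fderiv_fderiv_apply (hf : ContDiffOn ℝ (⊤ : ℕ∞) f U) (hU : IsOpen U) (hz : z ∈ U) (v w : ℂ) :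
    fderiv ℝ (fun x => fderiv ℝ f x v) z w = fderiv ℝ (fderiv ℝ f) z w v := by
  have hc : DifferentiableAt ℝ (fderiv ℝ f) z :=
    diffAt_of_contDiffOn (hf.fderiv_of_isOpen hU (by simp)) hU hz
  rw [fderiv_clm_apply hc (differentiableAt_const v)]
  simp

lemma symm_snd (hf : ContDiffOn ℝ (⊤ : ℕ∞) f U) (hU : IsOpen U) (hz : z ∈ U) (v w : ℂ) :
    fderiv ℝ (fderiv ℝ f) z v w = fderiv ℝ (fderiv ℝ f) z w v := by
  have hd : ∀ᶠ y in nhds z, HasFDerivAt f (fderiv ℝ f y) y := by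
    filter_upwards [hU.mem_nhds hz] with y hy using
      (diffAt_of_contDiffOn hf hU hy).hasFDerivAt
  have hc : DifferentiableAt ℝ (fderiv ℝ f) z :=
    diffAt_of_contDiffOn (hf.fderiv_of_isOpen hU (by simp)) hU hz
  exact second_derivative_symmetric_of_eventually hd hc.hasFDerivAt v w

lemma fderiv_dwbar_apply (hf : ContDiffOn ℝ (⊤ : ℕ∞) f U) (hU : IsOpen U) (hz : z ∈ U) (v : ℂ) :
    fderiv ℝ (fun x => dwbar f x) z v =
      (1/2 : ℂ) * (fderiv ℝ (fderiv ℝ f) z v 1 + Complex.I * fderiv ℝ (fderiv ℝ f) z v Complex.I) := by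
  have hA : DifferentiableAt ℝ (fun x => fderiv ℝ f x 1) z :=
    diffAt_of_contDiffOn (contDiffOn_fderiv_apply hf hU 1) hU hz
  have hB : DifferentiableAt ℝ (fun x => fderiv ℝ f x Complex.I) z :=
    diffAt_of_contDiffOn (contDiffOn_fderiv_apply hf hU Complex.I) hU hz
  unfold dwbar
  rw [fderiv_const_mul (hA.fun_add (hB.const_mul _)) ((1:ℂ)/2), fderiv_fun_add hA (hB.const_mul _),
    fderiv_const_mul hB Complex.I]
  simp only [ContinuousLinearMap.smul_apply, ContinuousLinearMap.add_apply, smul_eq_mul,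
    fderiv_fderiv_apply hf hU hz 1 v, fderiv_fderiv_apply hf hU hz Complex.I v]

lemma fderiv_dw_apply (hf : ContDiffOn ℝ (⊤ : ℕ∞) f U) (hU : IsOpen U) (hz : z ∈ U) (v : ℂ) :
    fderiv ℝ (fun x => dw f x) z v =
      (1/2 : ℂ) * (fderiv ℝ (fderiv ℝ f) z v 1 - Complex.I * fderiv ℝ (fderiv ℝ f) z v Complex.I) := by
  have hA : DifferentiableAt ℝ (fun x => fderiv ℝ f x 1) z :=
    diffAt_of_contDiffOn (contDiffOn_fderiv_apply hf hU 1) hU hz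
  have hB : DifferentiableAt ℝ (fun x => fderiv ℝ f x Complex.I) z :=
    diffAt_of_contDiffOn (contDiffOn_fderiv_apply hf hU Complex.I) hU hz
  unfold dw
  rw [fderiv_const_mul (hA.fun_sub (hB.const_mul _)) ((1:ℂ)/2), fderiv_fun_sub hA (hB.const_mul _),
    fderiv_const_mul hB Complex.I]
  simp only [ContinuousLinearMap.smul_apply, ContinuousLinearMap.sub_apply, smul_eq_mul,
    fderiv_fderiv_apply hf hU hz 1 v, fderiv_fderiv_apply hf hU hz Complex.I v]

lemma dw_dwbar_comm (hf : ContDiffOn ℝ (⊤ : ℕ∞) f U) (hU : IsOpen U) (hz : z ∈ U) :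
    dw (fun x => dwbar f x) z = dwbar (fun x => dw f x) z := by
  have e1 : dw (fun x => dwbar f x) z = (1/2 : ℂ) * (fderiv ℝ (fun x => dwbar f x) z 1
      - Complex.I * fderiv ℝ (fun x => dwbar f x) z Complex.I) := rfl
  have e2 : dwbar (fun x => dw f x) z = (1/2 : ℂ) * (fderiv ℝ (fun x => dw f x) z 1
      + Complex.I * fderiv ℝ (fun x => dw f x) z Complex.I) := rfl
  rw [e1, e2, fderiv_dwbar_apply hf hU hz 1, fderiv_dwbar_apply hf hU hz Complex.I,
    fderiv_dw_apply hf hU hz 1, fderiv_dw_apply hf hU hz Complex.I,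
    symm_snd hf hU hz Complex.I 1]
  ring

end helpers

/-- If `|φ|² = e^h`, `∂_{w̄}φ - i a_{w̄} φ = 0` with `φ` nonvanishing, and
`(i/2) f_{w w̄} + (Ω/4)(-C₀ + C|φ|²) = 0`, then `4 ∂_w ∂_{w̄} h - 2Ω(C₀ - C e^h) = 0`. -/
theorem stmt5 (C C₀ : ℝ) (U : Set ℂ) (hU : IsOpen U)
    (φ aw awbar : ℂ → ℂ) (h Ω : ℂ → ℝ)
    (hφ : ContDiffOn ℝ (⊤ : ℕ∞) φ U) (haw : ContDiffOn ℝ (⊤ : ℕ∞) aw U)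
    (hh : ContDiffOn ℝ (⊤ : ℕ∞) (fun z => (h z : ℂ)) U)
    (hΩ : ContDiffOn ℝ (⊤ : ℕ∞) (fun z => (Ω z : ℂ)) U)
    (hΩpos : ∀ z ∈ U, 0 < Ω z)
    (hreal : ∀ z ∈ U, awbar z = (starRingEnd ℂ) (aw z))
    (hnonvanish : ∀ z ∈ U, φ z ≠ 0)
    (hmod : ∀ z ∈ U, (Complex.normSq (φ z) : ℝ) = Real.exp (h z))
    (hhol : ∀ z ∈ U, dwbar φ z - Complex.I * awbar z * φ z = 0)
    (hmag : ∀ z ∈ U, (Complex.I / 2) * (dw awbar z - dwbar aw z) +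
      ((Ω z : ℂ) / 4) * (-(C₀ : ℂ) + (C : ℂ) * (Complex.normSq (φ z) : ℂ)) = 0) :
    ∀ z ∈ U, 4 * dw (fun x => dwbar (fun y => (h y : ℂ)) x) z -
      2 * (Ω z : ℂ) * ((C₀ : ℂ) - (C : ℂ) * Complex.exp (h z)) = 0 := by
  -- notation
  set H : ℂ → ℂ := fun y => (h y : ℂ) with hH
  set ψ : ℂ → ℂ := fun x => (starRingEnd ℂ) (φ x) with hψdef
  -- smoothness of auxiliary functions
  have hψ : ContDiffOn ℝ (⊤ : ℕ∞) ψ U := by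
    have : ContDiff ℝ (⊤ : ℕ∞) (fun w : ℂ => (starRingEnd ℂ) w) :=
      Complex.conjCLE.toContinuousLinearMap.contDiff
    exact this.comp_contDiffOn hφ
  have hawbar : ContDiffOn ℝ (⊤ : ℕ∞) awbar U := by
    have : ContDiff ℝ (⊤ : ℕ∞) (fun w : ℂ => (starRingEnd ℂ) w) :=
      Complex.conjCLE.toContinuousLinearMap.contDiff
    exact (this.comp_contDiffOn haw).congr fun x hx => hreal x hx
  have hdwbarH : ContDiffOn ℝ (⊤ : ℕ∞) (fun x => dwbar H x) U := contDiffOn_dwbar hh hU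
  have hdwbarψ : ContDiffOn ℝ (⊤ : ℕ∞) (fun x => dwbar ψ x) U := contDiffOn_dwbar hψ hU
  -- pointwise modulus identity in ℂ
  have hmodC : ∀ x ∈ U, Complex.exp (H x) = φ x * ψ x := by
    intro x hx
    have := hmod x hx
    calc Complex.exp (H x) = ((Real.exp (h x) : ℝ) : ℂ) := (Complex.ofReal_exp _).symm
      _ = ((Complex.normSq (φ x) : ℝ) : ℂ) := by rw [this]
      _ = φ x * ψ x := by rw [hψdef]; exact (Complex.mul_conj (φ x)).symm
  -- key1 : dwbar ψ = ψ * dwbar H - I * awbar * ψ on U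
  have key1 : ∀ x ∈ U, dwbar ψ x = ψ x * dwbar H x - Complex.I * awbar x * ψ x := by
    intro x hx
    have hφd := diffAt_of_contDiffOn hφ hU hx
    have hψd := diffAt_of_contDiffOn hψ hU hx
    have hHd := diffAt_of_contDiffOn hh hU hx
    have e1 : dwbar (fun y => Complex.exp (H y)) x = Complex.exp (H x) * dwbar H x :=
      dwbar_cexp hHd
    have e2 : dwbar (fun y => Complex.exp (H y)) x = dwbar (fun y => φ y * ψ y) x := by
      apply dwbar_congr
      filter_upwards [hU.mem_nhds hx] with y hy using hmodC y hy
    have e3 : dwbar (fun y => φ y * ψ y) x = dwbar φ x * ψ x + φ x * dwbar ψ x :=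
      dwbar_mul hφd hψd
    have e4 : dwbar φ x = Complex.I * awbar x * φ x :=
      sub_eq_zero.mp (hhol x hx)
    have e5 : φ x * dwbar ψ x = φ x * (ψ x * dwbar H x - Complex.I * awbar x * ψ x) := by
      have hE : Complex.exp (H x) = φ x * ψ x := hmodC x hx
      have := e1.symm.trans (e2.trans e3)
      rw [hE, e4] at this
      linear_combination -this
    exact mul_left_cancel₀ (hnonvanish x hx) e5
  -- key2 : dw ψ = -I * aw * ψ on U
  have key2 : ∀ x ∈ U, dw ψ x = -Complex.I * aw x * ψ x := by
    intro x hx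
    have hφd := diffAt_of_contDiffOn hφ hU hx
    have e1 : dw ψ x = (starRingEnd ℂ) (dwbar φ x) := dw_conj hφd
    rw [e1, sub_eq_zero.mp (hhol x hx), hreal x hx]
    simp only [map_mul, Complex.conj_I, Complex.conj_conj, hψdef]
  -- main computation
  intro z hz
  have hψd := diffAt_of_contDiffOn hψ hU hz
  have hawd := diffAt_of_contDiffOn haw hU hz
  have hawbard := diffAt_of_contDiffOn hawbar hU hz
  have hDHd := diffAt_of_contDiffOn hdwbarH hU hz
  have hDψd := diffAt_of_contDiffOn hdwbarψ hU hz
  -- Way A: product rule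
  have wayA : dw (fun x => ψ x * dwbar H x) z =
      dw ψ z * dwbar H z + ψ z * dw (fun x => dwbar H x) z := dw_mul hψd hDHd
  -- Way B: rewrite via key1 then differentiate
  have congr1 : dw (fun x => ψ x * dwbar H x) z =
      dw (fun x => dwbar ψ x + Complex.I * awbar x * ψ x) z := by
    apply dw_congr
    filter_upwards [hU.mem_nhds hz] with y hy
    have := key1 y hy
    linear_combination -this
  have hprodd : DifferentiableAt ℝ (fun x => Complex.I * awbar x * ψ x) z := by
    exact ((differentiableAt_const Complex.I).mul hawbard).mul hψd
  have split1 : dw (fun x => dwbar ψ x + Complex.I * awbar x * ψ x) z =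
      dw (fun x => dwbar ψ x) z + dw (fun x => Complex.I * awbar x * ψ x) z :=
    dw_add hDψd hprodd
  have prod1 : dw (fun x => Complex.I * awbar x * ψ x) z =
      Complex.I * (dw awbar z * ψ z + awbar z * dw ψ z) := by
    have e : dw (fun x => Complex.I * (awbar x * ψ x)) z =
        Complex.I * dw (fun x => awbar x * ψ x) z :=
      dw_const_mul (hawbard.mul hψd) Complex.I
    have e2 : dw (fun x => awbar x * ψ x) z = dw awbar z * ψ z + awbar z * dw ψ z :=
      dw_mul hawbard hψd
    calc dw (fun x => Complex.I * awbar x * ψ x) z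
        = dw (fun x => Complex.I * (awbar x * ψ x)) z := by
          apply dw_congr; filter_upwards with y; ring
      _ = Complex.I * (dw awbar z * ψ z + awbar z * dw ψ z) := by rw [e, e2]
  -- commute and evaluate dw dwbar ψ
  have comm : dw (fun x => dwbar ψ x) z = dwbar (fun x => dw ψ x) z :=
    dw_dwbar_comm hψ hU hz
  have congr2 : dwbar (fun x => dw ψ x) z =
      dwbar (fun x => -Complex.I * aw x * ψ x) z := by
    apply dwbar_congr
    filter_upwards [hU.mem_nhds hz] with y hy using key2 y hy
  have prod2 : dwbar (fun x => -Complex.I * aw x * ψ x) z =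
      -Complex.I * (dwbar aw z * ψ z + aw z * dwbar ψ z) := by
    have e : dwbar (fun x => -Complex.I * (aw x * ψ x)) z =
        -Complex.I * dwbar (fun x => aw x * ψ x) z :=
      dwbar_const_mul (hawd.mul hψd) (-Complex.I)
    have e2 : dwbar (fun x => aw x * ψ x) z = dwbar aw z * ψ z + aw z * dwbar ψ z :=
      dwbar_mul hawd hψd
    calc dwbar (fun x => -Complex.I * aw x * ψ x) z
        = dwbar (fun x => -Complex.I * (aw x * ψ x)) z := by
          apply dwbar_congr; filter_upwards with y; ring
      _ = -Complex.I * (dwbar aw z * ψ z + aw z * dwbar ψ z) := by rw [e, e2]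
  -- assemble: ψ z * dw dwbar H z = ψ z * I * (dw awbar z - dwbar aw z)
  have hψz : dw ψ z = -Complex.I * aw z * ψ z := key2 z hz
  have hDψz : dwbar ψ z = ψ z * dwbar H z - Complex.I * awbar z * ψ z := key1 z hz
  have main : ψ z * dw (fun x => dwbar H x) z =
      ψ z * (Complex.I * (dw awbar z - dwbar aw z)) := by
    have big := wayA.symm.trans (congr1.trans split1)
    rw [comm, congr2, prod2, prod1, hψz, hDψz] at big
    linear_combination big
  have hψnz : ψ z ≠ 0 := by
    simp only [hψdef]
    exact star_ne_zero.mpr (hnonvanish z hz)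
  have D2 : dw (fun x => dwbar H x) z = Complex.I * (dw awbar z - dwbar aw z) :=
    mul_left_cancel₀ hψnz main
  -- conclude using the magnetic equation
  have hm := hmag z hz
  have hE : ((Complex.normSq (φ z) : ℝ) : ℂ) = Complex.exp (h z) := by
    rw [hmod z hz]; exact Complex.ofReal_exp _
  rw [D2]
  rw [hE] at hm
  linear_combination 8 * hm
end

section
/- Superposition of vortex equations: if h satisfies Δ₀h + 2Ω(-C₀ + C₁ e^h) = 0 and h̃ satisfies Δ₀h̃ + 2 e^h Ω(-C₁ + C e^{h̃}) = 0, then h + h̃ satisfies Δ₀(h + h̃) + 2Ω(-C₀ + C e^{h + h̃}) = 0. -/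
open Complex

/-- Flat Laplacian Δ₀ = 4 ∂_w ∂_{w̄}. -/
noncomputable def lap (f : ℂ → ℂ) (z : ℂ) : ℂ :=
  4 * dw (fun x => dwbar f x) z

lemma dwbar_smooth {f : ℂ → ℂ} {U : Set ℂ} (hU : IsOpen U)
    (hf : ContDiffOn ℝ (⊤ : ℕ∞) f U) : ContDiffOn ℝ (⊤ : ℕ∞) (fun x => dwbar f x) U := by
  have hd : ContDiffOn ℝ (⊤ : ℕ∞) (fderiv ℝ f) U := hf.fderiv_of_isOpen hU (by simp)
  unfold dwbar
  exact contDiffOn_const.mul ((hd.clm_apply contDiffOn_const).add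
    (contDiffOn_const.mul (hd.clm_apply contDiffOn_const)))

lemma lap_add {F G : ℂ → ℂ} {U : Set ℂ} (hU : IsOpen U)
    (hF : ContDiffOn ℝ (⊤ : ℕ∞) F U) (hG : ContDiffOn ℝ (⊤ : ℕ∞) G U) {z : ℂ} (hz : z ∈ U) :
    lap (fun x => F x + G x) z = lap F z + lap G z := by
  have hFd : ∀ x ∈ U, DifferentiableAt ℝ F x := fun x hx =>
    (hF.differentiableOn (by simp)).differentiableAt (hU.mem_nhds hx)
  have hGd : ∀ x ∈ U, DifferentiableAt ℝ G x := fun x hx =>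
    (hG.differentiableOn (by simp)).differentiableAt (hU.mem_nhds hx)
  have heq : (fun x => dwbar (fun y => F y + G y) x) =ᶠ[nhds z]
      (fun x => dwbar F x + dwbar G x) := by
    filter_upwards [hU.mem_nhds hz] with x hx
    unfold dwbar
    rw [fderiv_fun_add (hFd x hx) (hGd x hx)]
    simp [ContinuousLinearMap.add_apply]
    ring
  have hdF : DifferentiableAt ℝ (fun x => dwbar F x) z :=
    (((dwbar_smooth hU hF).differentiableOn (by simp))).differentiableAt (hU.mem_nhds hz)
  have hdG : DifferentiableAt ℝ (fun x => dwbar G x) z :=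
    (((dwbar_smooth hU hG).differentiableOn (by simp))).differentiableAt (hU.mem_nhds hz)
  unfold lap dw
  rw [heq.fderiv_eq, fderiv_fun_add hdF hdG]
  simp [ContinuousLinearMap.add_apply]
  ring

/-- Superposition: if `Δ₀h + 2Ω(-C₀ + C₁ e^h) = 0` and
`Δ₀h̃ + 2 e^h Ω(-C₁ + C e^{h̃}) = 0`, then `Δ₀(h+h̃) + 2Ω(-C₀ + C e^{h+h̃}) = 0`. -/
theorem stmt7 (C C₀ C₁ : ℝ) (U : Set ℂ) (hU : IsOpen U)
    (h htil : ℂ → ℝ) (Ω : ℂ → ℝ)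
    (hh : ContDiffOn ℝ (⊤ : ℕ∞) (fun z => (h z : ℂ)) U)
    (hhtil : ContDiffOn ℝ (⊤ : ℕ∞) (fun z => (htil z : ℂ)) U)
    (hΩ : ContDiffOn ℝ (⊤ : ℕ∞) (fun z => (Ω z : ℂ)) U)
    (heq1 : ∀ z ∈ U, lap (fun x => (h x : ℂ)) z +
      2 * (Ω z : ℂ) * (-(C₀ : ℂ) + (C₁ : ℂ) * Complex.exp (h z)) = 0)
    (heq2 : ∀ z ∈ U, lap (fun x => (htil x : ℂ)) z +
      2 * Complex.exp (h z) * (Ω z : ℂ) *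
        (-(C₁ : ℂ) + (C : ℂ) * Complex.exp (htil z)) = 0) :
    ∀ z ∈ U, lap (fun x => ((h x + htil x : ℝ) : ℂ)) z +
      2 * (Ω z : ℂ) * (-(C₀ : ℂ) + (C : ℂ) * Complex.exp ((h z + htil z : ℝ))) = 0 := by
  intro z hz
  have e1 := heq1 z hz
  have e2 := heq2 z hz
  have hfe : (fun x => ((h x + htil x : ℝ) : ℂ)) = fun x => (h x : ℂ) + (htil x : ℂ) := by
    funext x; push_cast; ring
  rw [hfe, lap_add hU hh hhtil hz, Complex.ofReal_add, Complex.exp_add]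
  linear_combination e1 + e2
end
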